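/- For every k ∈ {1, …, m} and every integer j with 0 ≤ j ≤ n_k − 1, one has ∫_0^∞ P_{(n_1,…,n_m)}(x) · x^{j+p} · exp(−β_k x) dx = 0. -/

import Mathlib

open MeasureTheory Finset

/-- The multiple Laguerre function of type II (integral representation),
with contour a counterclockwise circle of center `0` and radius `r`. -/
noncomputable def mlP {m : ℕ} (β : Fin m → ℝ) (p : ℕ) (r : ℝ) (ν : Fin m → ℕ)
    (x : ℝ) : ℂ :=
  (((∑ k, ν k) + p).factorial : ℂ) * (x : ℂ) ^ (-(p : ℤ)) /
      (2 * Real.pi * Complex.I * ∏ k, (-(β k : ℂ)) ^ (ν k)) *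
    ∮ s in C((0 : ℂ), r),
      Complex.exp ((x : ℂ) * s) * s ^ (-(∑ k, ν k : ℤ) - (p : ℤ) - 1) *
        ∏ k, (s - (β k : ℂ)) ^ (ν k)

/-- The multiple Laguerre linear form of type I (integral representation),
with contour a counterclockwise circle of center `c` and radius `R`. -/
noncomputable def mlQ {m : ℕ} (β : Fin m → ℝ) (p : ℕ) (c R : ℝ) (ν : Fin m → ℕ)
    (y : ℝ) : ℂ :=
  -((∏ l, (-(β l : ℂ)) ^ (ν l)) * (y : ℂ) ^ p /
      (2 * Real.pi * Complex.I * (((∑ k, ν k) + p - 1).factorial : ℂ))) *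
    ∮ t in C((c : ℂ), R),
      Complex.exp (-((y : ℂ) * t)) * t ^ ((∑ k, ν k) + p - 1) *
        ∏ l, (t - (β l : ℂ)) ^ (-(ν l : ℤ))


/-!
Expanding `Q(s) = ∏ₗ (s - βₗ)^{nₗ} = ∑ q_d s^d` and taking the residue at `0` gives
`P(x) = c x^{-p} ∑_{i ≤ M} q_{M-i} x^i / i!` with `M = |n| + p`. By the moments
`∫₀^∞ x^e e^{-βx} dx = e!/β^{e+1}`, the integral is a multiple of
`∑_i q_{M-i} (i+j)!/i! β_k^{-i}`, the `j`-th derivative at `1/β_k` of the reflected polynomial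
`t^{M+j} Q(1/t)`. As `Q` vanishes to order `n_k > j` at `β_k`, the reflected polynomial vanishes
to order `n_k` at `1/β_k`, so this derivative is zero.
-/

namespace Polynomial

theorem reflect_one_X_sub_C {R : Type*} [CommRing R] (b : R) :
    reflect 1 (X - C b) = 1 - C b * X := by
  rw [reflect_sub, reflect_C, ← pow_one X, reflect_monomial, revAt_le le_rfl, Nat.sub_self,
    pow_zero, pow_one, sub_right_inj]

theorem reflect_X_sub_C_pow {R : Type*} [CommRing R] (b : R) (n : ℕ) :
    reflect n ((X - C b) ^ n) = (1 - C b * X) ^ n := by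
  induction n with
  | zero => simp [reflect_one]
  | succ n ih =>
    have hdeg : ((X - C b) ^ n).natDegree ≤ n :=
      (natDegree_pow_le_of_le n (natDegree_X_sub_C_le b)).trans (mul_one n).le
    rw [pow_succ, reflect_mul _ _ hdeg (natDegree_X_sub_C_le b), ih, reflect_one_X_sub_C, pow_succ]

variable {K : Type*} [Field K]

theorem X_sub_C_inv_pow_dvd_reflect {b : K} (hb : b ≠ 0) {Q : K[X]} {n N : ℕ}
    (hQ : Q.natDegree ≤ N) (h : (X - C b) ^ n ∣ Q) : (X - C b⁻¹) ^ n ∣ reflect N Q := by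
  obtain ⟨S, rfl⟩ := h
  rcases eq_or_ne S 0 with rfl | hS
  · simp
  rw [natDegree_mul (pow_ne_zero _ (X_sub_C_ne_zero b)) hS, natDegree_pow, natDegree_X_sub_C,
    mul_one] at hQ
  obtain ⟨N', rfl⟩ : ∃ N', N = n + N' := ⟨N - n, by omega⟩
  have hfactor : 1 - C b * X = C (-b) * (X - C b⁻¹) := by
    rw [mul_sub, ← C_mul, neg_mul, mul_inv_cancel₀ hb]
    simp only [map_neg, map_one]
    ring
  rw [reflect_mul _ _ (natDegree_pow_le_of_le n (natDegree_X_sub_C_le b) |>.trans (mul_one n).le)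
    (show S.natDegree ≤ N' by omega), reflect_X_sub_C_pow, hfactor, mul_pow]
  exact (dvd_mul_left _ _).mul_right _

theorem eval_iterate_derivative_reflect {Q : K[X]} {M : ℕ} (hQ : Q.natDegree ≤ M) (j : ℕ)
    (u : K) : (derivative^[j] (reflect (M + j) Q)).eval u =
      ∑ i ∈ range (M + 1), Q.coeff (M - i) * (i + j).descFactorial j * u ^ i := by
  have hdeg : (derivative^[j] (reflect (M + j) Q)).natDegree < M + 1 := by
    have := (natDegree_iterate_derivative (reflect (M + j) Q) j).trans
      (Nat.sub_le_sub_right (natDegree_reflect_le.trans (max_le le_rfl (by omega))) j)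
    omega
  rw [eval_eq_sum_range' hdeg]
  refine sum_congr rfl fun i hi => ?_
  rw [coeff_iterate_derivative, coeff_reflect, revAt_le (by rw [mem_range] at hi; omega),
    show M + j - (i + j) = M - i by omega, nsmul_eq_mul]
  ring

theorem sum_coeff_mul_descFactorial_mul_inv_pow_eq_zero {b : K} (hb : b ≠ 0) {Q : K[X]}
    {n M j : ℕ} (hQ : Q.natDegree ≤ M) (h : (X - C b) ^ n ∣ Q) (hj : j < n) :
    ∑ i ∈ range (M + 1), Q.coeff (M - i) * (i + j).descFactorial j * b⁻¹ ^ i = 0 := by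
  rw [← eval_iterate_derivative_reflect hQ]
  have hdvd := pow_sub_dvd_iterate_derivative_of_pow_dvd j
    (X_sub_C_inv_pow_dvd_reflect hb (hQ.trans (M.le_add_right j)) h)
  exact dvd_iff_isRoot.mp ((dvd_pow_self _ (by omega)).trans hdvd)

end Polynomial

open Complex Polynomial

theorem circleIntegral_exp_mul_div_pow (x : ℂ) {r : ℝ} (hr : 0 < r) (i : ℕ) :
    ∮ s in C(0, r), cexp (x * s) / s ^ (i + 1) = 2 * Real.pi * I * x ^ i / i.factorial := by
  have hf : DifferentiableOn ℂ (fun s => cexp (x * s)) (Metric.closedBall 0 r) := by fun_prop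
  have h := hf.circleIntegral_one_div_sub_center_pow_smul hr i
  simp only [iteratedDeriv_cexp_const_mul, sub_zero, smul_eq_mul, mul_zero, exp_zero,
    mul_one] at h
  rw [mul_div_right_comm, ← h]
  congr 1; ext s; ring

theorem circleIntegral_exp_mul_zpow_mul_eval (x : ℂ) {r : ℝ} (hr : 0 < r) {Q : ℂ[X]} {M : ℕ}
    (hQ : Q.natDegree ≤ M) :
    ∮ s in C(0, r), cexp (x * s) * s ^ (-(M : ℤ) - 1) * Q.eval s =
      2 * Real.pi * I * ∑ i ∈ range (M + 1), Q.coeff (M - i) * x ^ i / i.factorial := by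
  calc _ = ∮ s in C(0, r),
          ∑ i ∈ range (M + 1), Q.coeff (M - i) * (cexp (x * s) / s ^ (i + 1)) := by
        refine circleIntegral.integral_congr hr.le fun s hs => ?_
        have hs0 : s ≠ 0 := by rintro rfl; simp [hr.ne] at hs
        rw [eval_eq_sum_range' (Nat.lt_succ_of_le hQ), ← sum_range_reflect, mul_sum]
        refine sum_congr rfl fun i hi => ?_
        have hiM : i ≤ M := by rw [mem_range] at hi; omega
        rw [show M + 1 - 1 - i = M - i by omega, zpow_sub_one₀ hs0, zpow_neg, zpow_natCast]
        field_simp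
        rw [mul_assoc, ← pow_add, show M - i + (i + 1) = M + 1 by omega, pow_succ]
        ring
    _ = _ := by
        rw [circleIntegral.integral_fun_sum fun i _ => ?_, mul_sum]
        · refine sum_congr rfl fun i _ => ?_
          rw [circleIntegral.integral_const_mul, circleIntegral_exp_mul_div_pow x hr]
          ring
        refine ContinuousOn.circleIntegrable hr.le <| continuousOn_const.mul <|
          (by fun_prop : Continuous fun s => cexp (x * s)).continuousOn.div
            (continuous_pow _).continuousOn fun s hs => pow_ne_zero _ ?_
        rintro rfl
        simp [hr.ne] at hs

theorem integral_pow_mul_exp_neg_mul_Ioi (e : ℕ) {b : ℝ} (hb : 0 < b) :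
    ∫ x in Set.Ioi (0 : ℝ), (x : ℂ) ^ e * cexp (-(b * x)) =
      e.factorial / (b : ℂ) ^ (e + 1) := by
  have h := integral_cpow_mul_exp_neg_mul_Ioi (a := (e : ℂ) + 1)
    (by simp only [add_re, natCast_re, one_re]; positivity) hb
  simp only [add_sub_cancel_right, cpow_natCast, Gamma_nat_eq_factorial] at h
  rw [h, show (e : ℂ) + 1 = ((e + 1 : ℕ) : ℂ) by push_cast; ring, cpow_natCast, one_div,
    inv_pow, inv_mul_eq_div]

theorem integrableOn_pow_mul_exp_neg_mul_Ioi (e : ℕ) {b : ℝ} (hb : 0 < b) :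
    IntegrableOn (fun x : ℝ => (x : ℂ) ^ e * cexp (-(b * x))) (Set.Ioi 0) := by
  refine Integrable.of_integral_ne_zero ?_
  rw [integral_pow_mul_exp_neg_mul_Ioi e hb]
  have : (b : ℂ) ≠ 0 := by exact_mod_cast hb.ne'
  simp [Nat.factorial_ne_zero, this]

section

variable {m : ℕ} (β : Fin m → ℝ) (p : ℕ) {r : ℝ} (ν : Fin m → ℕ)

noncomputable def nodePolynomial : ℂ[X] :=
  ∏ k, (X - C (β k : ℂ)) ^ ν k

theorem natDegree_nodePolynomial :
    (nodePolynomial β ν).natDegree = ∑ k, ν k := by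
  simp [nodePolynomial, natDegree_prod_of_monic, (monic_X_sub_C _).pow]

theorem X_sub_C_pow_dvd_nodePolynomial (k : Fin m) :
    (X - C (β k : ℂ)) ^ ν k ∣ nodePolynomial β ν :=
  dvd_prod_of_mem _ (mem_univ k)

theorem mlP_eq_sum (hr : 0 < r) (x : ℝ) :
    mlP β p r ν x =
      ((∑ k, ν k) + p).factorial / (∏ k, (-(β k : ℂ)) ^ ν k) * (x : ℂ) ^ (-(p : ℤ)) *
      ∑ i ∈ range ((∑ k, ν k) + p + 1),
        (nodePolynomial β ν).coeff ((∑ k, ν k) + p - i) * (x : ℂ) ^ i / i.factorial := by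
  have hint := circleIntegral_exp_mul_zpow_mul_eval (x : ℂ) hr (Q := nodePolynomial β ν)
    (M := (∑ k, ν k) + p) ((natDegree_nodePolynomial β ν).trans_le (Nat.le_add_right _ p))
  simp only [nodePolynomial, eval_prod, eval_pow, eval_sub, eval_X, eval_C] at hint
  push_cast at hint
  rw [mlP, show -(∑ k, (ν k : ℤ)) - p - 1 = -(∑ k, (ν k : ℤ) + p) - 1 by ring, hint,
    nodePolynomial]
  field_simp [Real.pi_ne_zero, I_ne_zero]

theorem mlP_mul_pow_eq_sum (hr : 0 < r) (j : ℕ) {x : ℝ} (hx : x ≠ 0) :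
    mlP β p r ν x * (x : ℂ) ^ (j + p) =
      ((∑ k, ν k) + p).factorial / (∏ k, (-(β k : ℂ)) ^ ν k) *
        ∑ i ∈ range ((∑ k, ν k) + p + 1),
          (nodePolynomial β ν).coeff ((∑ k, ν k) + p - i) / i.factorial *
            (x : ℂ) ^ (i + j) := by
  have hx0 : (x : ℂ) ≠ 0 := by exact_mod_cast hx
  rw [mlP_eq_sum β p ν hr, mul_sum, mul_sum, sum_mul]
  refine sum_congr rfl fun i _ => ?_
  rw [zpow_neg, zpow_natCast]
  field_simp
  ring

theorem integral_mlP_mul_pow_mul_exp_neg_mul (hr : 0 < r) (j : ℕ) {b : ℝ} (hb : 0 < b) :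
    ∫ x in Set.Ioi (0 : ℝ), mlP β p r ν x * (x : ℂ) ^ (j + p) * cexp (-(b * x)) =
      ((∑ k, ν k) + p).factorial / (∏ k, (-(β k : ℂ)) ^ ν k) * (b : ℂ)⁻¹ ^ (j + 1) *
        ∑ i ∈ range ((∑ k, ν k) + p + 1),
          (nodePolynomial β ν).coeff ((∑ k, ν k) + p - i) * (i + j).descFactorial j *
            (b : ℂ)⁻¹ ^ i := by
  have hb0 : (b : ℂ) ≠ 0 := by exact_mod_cast hb.ne'
  have hmoment : ∀ (a : ℂ) (i : ℕ),
      a / i.factorial * ((i + j).factorial / (b : ℂ) ^ (i + j + 1)) =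
        (b : ℂ)⁻¹ ^ (j + 1) * (a * (i + j).descFactorial j * (b : ℂ)⁻¹ ^ i) := by
    intro a i
    have hi : (i.factorial : ℂ) ≠ 0 := by exact_mod_cast i.factorial_ne_zero
    rw [← Nat.factorial_mul_descFactorial (Nat.le_add_left j i), Nat.add_sub_cancel, inv_pow,
      inv_pow]
    push_cast
    field_simp
    ring
  rw [setIntegral_congr_fun measurableSet_Ioi fun x hx => by
      rw [mlP_mul_pow_eq_sum β p ν hr j (Set.mem_Ioi.mp hx).ne', mul_assoc, sum_mul],
    integral_const_mul]
  simp only [mul_assoc]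
  rw [integral_finsetSum _ fun i _ => (integrableOn_pow_mul_exp_neg_mul_Ioi _ hb).const_mul _]
  simp only [integral_const_mul, integral_pow_mul_exp_neg_mul_Ioi _ hb, hmoment]
  rw [← mul_sum]
  simp only [mul_assoc]

end

theorem stmt_11_general (m : ℕ) (β : Fin m → ℝ) (hβpos : ∀ k, 0 < β k)
    (n : Fin m → ℕ) (p : ℕ) (r : ℝ) (hr : 0 < r) :
    ∀ k : Fin m, ∀ j : ℕ, j < n k →
      ∫ x in Set.Ioi (0 : ℝ),
        mlP β p r n x * (x : ℂ) ^ (j + p) * Complex.exp (-((β k : ℂ) * x)) = 0 := by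
  intro k j hj
  have hβk : (β k : ℂ) ≠ 0 := by exact_mod_cast (hβpos k).ne'
  rw [integral_mlP_mul_pow_mul_exp_neg_mul β p n hr j (hβpos k),
    sum_coeff_mul_descFactorial_mul_inv_pow_eq_zero hβk
      ((natDegree_nodePolynomial β n).trans_le (Nat.le_add_right _ p))
      (X_sub_C_pow_dvd_nodePolynomial β n k) hj, mul_zero]

theorem stmt_11 (m : ℕ) (hm : 1 ≤ m) (β : Fin m → ℝ) (hβpos : ∀ k, 0 < β k)
    (hβ : Function.Injective β) (n : Fin m → ℕ) (hn : ∀ k, 1 ≤ n k) (p : ℕ)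
    (r : ℝ) (hr : 0 < r) (hrβ : ∀ k, r < β k) :
    ∀ k : Fin m, ∀ j : ℕ, j < n k →
      ∫ x in Set.Ioi (0 : ℝ),
        mlP β p r n x * (x : ℂ) ^ (j + p) * Complex.exp (-((β k : ℂ) * x)) = 0 :=
  stmt_11_general m β hβpos n p r hr
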